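/- arXiv:2309.03066 — 3 statements merged into one kernel-verified Lean document; each statement's English description precedes it below -/
import Mathlib

section
/- Let n be a natural number and v ∈ ℂ^n a nonzero vector with ∑_j v_j² = 0. Then the ℝ-linear map ℝ^n → ℂ defined by x ↦ ∑_j v_j x_j is surjective. -/
/-- If `v ∈ ℂ^n` is nonzero with `∑ j, (v j)^2 = 0`, then the `ℝ`-linear
map `ℝ^n → ℂ`, `x ↦ ∑ j, v j * x j`, is surjective. -/
theorem surjective_pairing_of_isotropic (n : ℕ) (v : Fin n → ℂ)
    (hv : v ≠ 0) (h : (∑ j, (v j) ^ 2) = 0) :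
    Function.Surjective (fun x : Fin n → ℝ => ∑ j, v j * (x j : ℂ)) := by
  set A : ℝ := ∑ j, (v j).re ^ 2 with hAdef
  set B : ℝ := ∑ j, (v j).im ^ 2 with hBdef
  set C : ℝ := ∑ j, (v j).re * (v j).im with hCdef
  have hre : A - B = 0 := by
    have := congrArg Complex.re h
    simpa [Complex.re_sum, pow_two, Complex.mul_re,
      Finset.sum_sub_distrib, hAdef, hBdef] using this
  have him : C = 0 := by
    have := congrArg Complex.im h
    simpa [Complex.im_sum, pow_two, Complex.mul_im, hCdef, two_mul, mul_comm,
      Finset.sum_add_distrib] using this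
  have hAB : A = B := by linarith
  have hApos : 0 < A := by
    obtain ⟨j, hj⟩ : ∃ j, v j ≠ 0 := by
      by_contra hc
      push_neg at hc
      exact hv (funext hc)
    have hsum : 0 < A + B := by
      have h0 : (v j).re ≠ 0 ∨ (v j).im ≠ 0 := by
        by_contra hc; push_neg at hc
        exact hj (Complex.ext hc.1 hc.2)
      have hpos : 0 < (v j).re ^ 2 + (v j).im ^ 2 := by
        rcases h0 with h1 | h1 <;> positivity
      calc (0:ℝ) < (v j).re ^ 2 + (v j).im ^ 2 := hpos
        _ ≤ A + B := by
            rw [hAdef, hBdef, ← Finset.sum_add_distrib]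
            exact Finset.single_le_sum (f := fun j => (v j).re ^ 2 + (v j).im ^ 2)
              (fun i _ => by positivity) (Finset.mem_univ j)
    linarith
  intro z
  refine ⟨fun j => (z.re * (v j).re + z.im * (v j).im) / A, ?_⟩
  have hA0 : A ≠ 0 := ne_of_gt hApos
  apply Complex.ext
  · simp only [Complex.re_sum, Complex.mul_re, Complex.ofReal_re, Complex.ofReal_im,
      mul_zero, sub_zero]
    calc ∑ j, (v j).re * ((z.re * (v j).re + z.im * (v j).im) / A)
        = (∑ j, (z.re * (v j).re ^ 2 + z.im * ((v j).re * (v j).im))) / A := by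
          rw [Finset.sum_div]
          exact Finset.sum_congr rfl fun j _ => by field_simp
      _ = (z.re * A + z.im * C) / A := by
          rw [Finset.sum_add_distrib, hAdef, hCdef, Finset.mul_sum, Finset.mul_sum]
      _ = z.re := by rw [him]; field_simp; ring
  · simp only [Complex.im_sum, Complex.mul_im, Complex.ofReal_re, Complex.ofReal_im,
      mul_zero, zero_add]
    calc ∑ j, (v j).im * ((z.re * (v j).re + z.im * (v j).im) / A)
        = (∑ j, (z.re * ((v j).re * (v j).im) + z.im * (v j).im ^ 2)) / A := by
          rw [Finset.sum_div]
          exact Finset.sum_congr rfl fun j _ => by field_simp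
      _ = (z.re * C + z.im * B) / A := by
          rw [Finset.sum_add_distrib, hBdef, hCdef, Finset.mul_sum, Finset.mul_sum]
      _ = z.im := by rw [him, ← hAB]; field_simp; ring
end

section
/- Let W be a finite-dimensional real inner product space, let V = ℂ ⊗_ℝ W, and let Q be the complex quadratic form on V obtained by base change to ℂ of the real quadratic form x ↦ ⟨x, x⟩ on W. For every nonzero w ∈ V with Q(w) = 0, the ℝ-linear map W → ℂ sending x to polar(Q)(w, 1 ⊗ x) is surjective, where polar(Q)(u, v) := Q(u + v) − Q(u) − Q(v) is the polar bilinear form of Q. -/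
open TensorProduct

lemma exists_decomp_complex_tensor {W : Type*} [AddCommGroup W] [Module ℝ W]
    (w : ℂ ⊗[ℝ] W) : ∃ a b : W, w = (1 : ℂ) ⊗ₜ[ℝ] a + Complex.I ⊗ₜ[ℝ] b := by
  induction w using TensorProduct.induction_on with
  | zero => exact ⟨0, 0, by simp⟩
  | tmul z x =>
    refine ⟨z.re • x, z.im • x, ?_⟩
    rw [tmul_smul, tmul_smul, smul_tmul', smul_tmul', ← add_tmul]
    congr 1
    simp [Complex.ext_iff]
  | add u v hu hv =>
    obtain ⟨a₁, b₁, rfl⟩ := hu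
    obtain ⟨a₂, b₂, rfl⟩ := hv
    refine ⟨a₁ + a₂, b₁ + b₂, by rw [tmul_add, tmul_add]; abel⟩

/-- Let `W` be a finite-dimensional real inner product space,
`V = ℂ ⊗[ℝ] W`, and `Q` the complex quadratic form on `V` obtained by base change to `ℂ`
of the real quadratic form `x ↦ ⟪x, x⟫` on `W`. For every nonzero `w ∈ V` with `Q w = 0`,
the `ℝ`-linear map `W → ℂ`, `x ↦ polar Q w (1 ⊗ x)`, is surjective. -/
theorem surjective_polar_on_real_points_of_isotropic
    (W : Type*) [NormedAddCommGroup W] [InnerProductSpace ℝ W] [FiniteDimensional ℝ W]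
    (Qr : QuadraticForm ℝ W) (hQr : ∀ x, Qr x = (inner ℝ x x : ℝ))
    (w : ℂ ⊗[ℝ] W) (hw : w ≠ 0) (hiso : Qr.baseChange ℂ w = 0) :
    Function.Surjective
      (fun x : W => QuadraticMap.polar (⇑(Qr.baseChange ℂ)) w ((1 : ℂ) ⊗ₜ[ℝ] x)) := by
  obtain ⟨a, b, rfl⟩ := exists_decomp_complex_tensor w
  -- polar of the real form
  have hpolar : ∀ x y : W, QuadraticMap.polar (⇑Qr) x y = 2 * inner ℝ x y := by
    intro x y
    simp only [QuadraticMap.polar, hQr]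
    rw [real_inner_add_add_self]
    ring
  -- polar of the base change on elementary tensors
  have hpolarC : ∀ (z z' : ℂ) (x y : W),
      QuadraticMap.polar (⇑(Qr.baseChange ℂ)) (z ⊗ₜ[ℝ] x) (z' ⊗ₜ[ℝ] y)
        = (2 * inner ℝ x y : ℝ) • (z * z') := by
    intro z z' x y
    rw [← QuadraticMap.polarBilin_apply_apply, QuadraticForm.polarBilin_baseChange,
      LinearMap.BilinForm.baseChange_tmul, QuadraticMap.polarBilin_apply_apply, hpolar]
  -- compute Q w = 0 componentwise
  have hQw : Qr.baseChange ℂ ((1 : ℂ) ⊗ₜ[ℝ] a + Complex.I ⊗ₜ[ℝ] b)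
      = ((Qr a - Qr b : ℝ) : ℂ) + (2 * inner ℝ a b : ℝ) • Complex.I := by
    rw [QuadraticMap.map_add (⇑(Qr.baseChange ℂ)) ((1:ℂ) ⊗ₜ[ℝ] a) (Complex.I ⊗ₜ[ℝ] b), QuadraticForm.baseChange_tmul, QuadraticForm.baseChange_tmul,
      hpolarC]
    simp [Complex.I_mul_I, Complex.real_smul, Complex.ext_iff]
    ring
  rw [hQw] at hiso
  have hre : Qr a = Qr b := by
    have := congrArg Complex.re hiso
    simp [Complex.real_smul] at this
    linarith
  have him : (inner ℝ a b : ℝ) = 0 := by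
    have := congrArg Complex.im hiso
    simp [Complex.real_smul] at this
    linarith
  -- a ≠ 0 and b ≠ 0
  have hab : a ≠ 0 ∧ b ≠ 0 := by
    by_contra h
    push_neg at h
    rcases Classical.em (a = 0) with ha | ha
    · have hb : b = 0 := by
        have : Qr b = 0 := by rw [← hre, ha]; simp [hQr]
        rw [hQr] at this
        exact inner_self_eq_zero.mp this
      exact hw (by rw [ha, hb]; simp)
    · have hb := h ha
      have ha0 : a = 0 := by
        have : Qr a = 0 := by rw [hre, hb]; simp [hQr]
        rw [hQr] at this
        exact inner_self_eq_zero.mp this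
      exact ha ha0
  obtain ⟨ha, hb⟩ := hab
  have hna : (inner ℝ a a : ℝ) ≠ 0 := fun h => ha (inner_self_eq_zero.mp h)
  have hnb : (inner ℝ b b : ℝ) ≠ 0 := fun h => hb (inner_self_eq_zero.mp h)
  have him' : (inner ℝ b a : ℝ) = 0 := by rw [real_inner_comm]; exact him
  intro c
  refine ⟨(c.re / (2 * inner ℝ a a)) • a + (c.im / (2 * inner ℝ b b)) • b, ?_⟩
  simp only [QuadraticMap.polar_add_left, hpolarC, one_mul, mul_one]
  rw [inner_add_right, inner_add_right, real_inner_smul_right, real_inner_smul_right,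
    real_inner_smul_right, real_inner_smul_right, him, him']
  simp only [Complex.ext_iff, Complex.real_smul, Complex.add_re, Complex.add_im,
    Complex.mul_re, Complex.mul_im, Complex.ofReal_re, Complex.ofReal_im, Complex.one_re,
    Complex.one_im, Complex.I_re, Complex.I_im]
  constructor
  · field_simp
    ring
  · field_simp
    ring
end

section
/- Let W be a finite-dimensional real inner product space, let V = ℂ ⊗_ℝ W, let Q be the complex quadratic form on V obtained by base change to ℂ of the real quadratic form x ↦ ⟨x, x⟩ on W, and let Re : V → W be the ℝ-linear map determined by Re(z ⊗ x) = (Re z) · x. If U ⊆ V is a complex subspace that is totally isotropic for Q (i.e. Q(u) = 0 for all u ∈ U), then the restriction of Re to U is injective. -/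
open TensorProduct

/-- Let `W` be a finite-dimensional real inner product space,
`V = ℂ ⊗[ℝ] W`, `Q` the base change to `ℂ` of the quadratic form `x ↦ ⟪x, x⟫` on `W`,
and `Re : V → W` the `ℝ`-linear map determined by `Re (z ⊗ x) = (Re z) • x`. If `U ⊆ V`
is a complex subspace totally isotropic for `Q`, then `Re` restricted to `U` is injective. -/
theorem realPart_injOn_totallyIsotropic
    (W : Type*) [NormedAddCommGroup W] [InnerProductSpace ℝ W] [FiniteDimensional ℝ W]
    (Qr : QuadraticForm ℝ W) (hQr : ∀ x, Qr x = (inner ℝ x x : ℝ))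
    (Re : (ℂ ⊗[ℝ] W) →ₗ[ℝ] W) (hRe : ∀ (z : ℂ) (x : W), Re (z ⊗ₜ[ℝ] x) = z.re • x)
    (U : Submodule ℂ (ℂ ⊗[ℝ] W)) (hU : ∀ u ∈ U, Qr.baseChange ℂ u = 0) :
    Set.InjOn ⇑Re ↑U := by
  -- imaginary part map
  set Im : (ℂ ⊗[ℝ] W) →ₗ[ℝ] W :=
    TensorProduct.lift ((LinearMap.lsmul ℝ W).comp Complex.imLm) with hIm
  have hImt : ∀ (z : ℂ) (x : W), Im (z ⊗ₜ[ℝ] x) = z.im • x := by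
    intro z x; simp [hIm]
  -- decomposition
  have hdec : ∀ u : ℂ ⊗[ℝ] W, (1 : ℂ) ⊗ₜ[ℝ] Re u + Complex.I ⊗ₜ[ℝ] Im u = u := by
    intro u
    induction u using TensorProduct.induction_on with
    | zero => simp
    | tmul z x =>
        rw [hRe, hImt, tmul_smul, tmul_smul, smul_tmul', smul_tmul',
          ← add_tmul]
        congr 1
        simp [Complex.real_smul, Complex.ext_iff]
    | add a b ha hb =>
        rw [map_add, map_add, tmul_add, tmul_add, add_add_add_comm, ha, hb]
  intro u hu v hv huv
  have hd : u - v ∈ U := U.sub_mem hu hv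
  have hRe0 : Re (u - v) = 0 := by rw [map_sub, huv, sub_self]
  have hud : u - v = Complex.I ⊗ₜ[ℝ] Im (u - v) := by
    conv_lhs => rw [← hdec (u - v)]
    rw [hRe0]; simp
  have hQ := hU _ hd
  rw [hud, QuadraticForm.baseChange_tmul] at hQ
  have : Qr (Im (u - v)) = 0 := by
    have := hQ
    simp only [Complex.I_mul_I] at this
    have h2 : ((Qr (Im (u - v)) : ℝ) : ℂ) = 0 := by
      rw [Algebra.smul_def] at this
      simpa using this
    exact_mod_cast h2
  have hb : Im (u - v) = 0 := by
    have := this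
    rw [hQr] at this
    exact inner_self_eq_zero.mp this
  have : u - v = 0 := by rw [hud, hb, tmul_zero]
  exact sub_eq_zero.mp this
end
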